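/- Let η₁ ∈ ℝ, σ ∈ {1,-1}, and let A₁, A₂ : ℝ → ℂ solve the ODE system for the standard-form nonlinearity with parameters (σ, η₁, η₂, η₃, λ₀, q₁, q₂, q₃) where λ₀ = 0 and q₁=q₂=q₃=0. Then the quantity |A₁(t)|⁴ + 2σ tanh(η₁)·|A₁(t)|²|A₂(t)|² + |A₂(t)|⁴ is constant in t. -/

import Mathlib

open Real

open ComplexConjugate

/-!
If `i A' = F` then `d/dt |A|² = 2 Im(F · conj A)`. In the standard-form nonlinearity the diagonal
terms are real multiples of `|A|² A` and drop out, and with `s = sinh η₁`, `c = σ cosh η₁` and the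
flux `J = 2 Im(A₂ · conj A₁)` one gets `|A₁|²' = J (s|A₁|² + c|A₂|²)` and
`|A₂|²' = -J (s|A₂|² + c|A₁|²)`. Hence `c (|A₁|⁴ + |A₂|⁴) + 2 s |A₁|²|A₂|²` is conserved, and since
`σ² = 1`, dividing it by `σ cosh η₁` gives the stated quantity.
-/

theorem hasDerivAt_quadratic_invariant {x y : ℝ → ℝ} {J s c t : ℝ}
    (hx : HasDerivAt x (J * (s * x t + c * y t)) t)
    (hy : HasDerivAt y (-J * (s * y t + c * x t)) t) :
    HasDerivAt (fun u => c * (x u ^ 2 + y u ^ 2) + 2 * s * (x u * y u)) 0 t := by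
  refine ((((hx.fun_pow 2).fun_add (hy.fun_pow 2)).const_mul c).fun_add
    ((hx.fun_mul hy).const_mul (2 * s))).congr_deriv ?_
  push_cast
  ring

open Complex in
theorem Complex.hasDerivAt_normSq_of_I_mul_eq {A : ℝ → ℂ} {A' F : ℂ} {t : ℝ}
    (hA : HasDerivAt A A' t) (hF : I * A' = F) :
    HasDerivAt (fun u => normSq (A u)) (2 * (F * conj (A t)).im) t := by
  have hA' : A' = -I * F := by linear_combination (-I) * hF + A' * I_sq
  convert hA.norm_sq using 1
  · ext u; exact normSq_eq_norm_sq (A u)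
  · simp [Complex.inner, hA']

open Complex in
noncomputable def cubicField (a s c : ℝ) (z w : ℂ) : ℂ :=
  a * normSq z * z + s * (2 * normSq z * w + z ^ 2 * conj w) + c * normSq w * w

open Complex in
theorem im_cubicField_mul_conj (a s c : ℝ) (z w : ℂ) :
    (cubicField a s c z w * conj z).im = (s * normSq z + c * normSq w) * (w * conj z).im := by
  simp only [cubicField, normSq_apply, mul_im, mul_re, add_im, add_re, ofReal_re, ofReal_im,
    conj_re, conj_im, sq, re_ofNat, im_ofNat]
  ring

open Complex in
theorem cubicField_system_conserved {a d s c : ℝ} {A₁ A₂ A₁' A₂' : ℝ → ℂ}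
    (hd₁ : ∀ t, HasDerivAt A₁ (A₁' t) t) (hd₂ : ∀ t, HasDerivAt A₂ (A₂' t) t)
    (h₁ : ∀ t, I * A₁' t = cubicField a s c (A₁ t) (A₂ t))
    (h₂ : ∀ t, I * A₂' t = cubicField d s c (A₂ t) (A₁ t)) (u v : ℝ) :
    c * (normSq (A₁ u) ^ 2 + normSq (A₂ u) ^ 2) + 2 * s * (normSq (A₁ u) * normSq (A₂ u))
      = c * (normSq (A₁ v) ^ 2 + normSq (A₂ v) ^ 2) + 2 * s * (normSq (A₁ v) * normSq (A₂ v)) := by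
  have hE (t : ℝ) : HasDerivAt (fun u => c * (normSq (A₁ u) ^ 2 + normSq (A₂ u) ^ 2)
      + 2 * s * (normSq (A₁ u) * normSq (A₂ u))) 0 t := by
    have n₁ := hasDerivAt_normSq_of_I_mul_eq (hd₁ t) (h₁ t)
    have n₂ := hasDerivAt_normSq_of_I_mul_eq (hd₂ t) (h₂ t)
    have hflux : (A₁ t * conj (A₂ t)).im = -(A₂ t * conj (A₁ t)).im := by
      rw [← conj_im, map_mul, conj_conj, mul_comm]
    rw [im_cubicField_mul_conj] at n₁ n₂
    rw [hflux] at n₂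
    refine hasDerivAt_quadratic_invariant (J := 2 * (A₂ t * conj (A₁ t)).im) ?_ ?_
    · convert n₁ using 1; ring
    · convert n₂ using 1; ring
  exact is_const_of_deriv_eq_zero (fun t => (hE t).differentiableAt) (fun t => (hE t).deriv) u v

theorem stmt16 (σ η₁ η₂ η₃ : ℝ) (hσ : σ = 1 ∨ σ = -1)
    (A₁ A₂ A₁' A₂' : ℝ → ℂ)
    (hd₁ : ∀ t, HasDerivAt A₁ (A₁' t) t)
    (hd₂ : ∀ t, HasDerivAt A₂ (A₂' t) t)
    (hode₁ : ∀ t, Complex.I * A₁' t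
      = ((η₂ * Real.sinh η₁ - σ * η₃ * Real.cosh η₁ : ℝ) : ℂ)
          * (Complex.normSq (A₁ t) : ℂ) * A₁ t
        + ((Real.sinh η₁ : ℝ) : ℂ)
          * (2 * (Complex.normSq (A₁ t) : ℂ) * A₂ t + A₁ t ^ 2 * (starRingEnd ℂ) (A₂ t))
        + ((σ * Real.cosh η₁ : ℝ) : ℂ) * (Complex.normSq (A₂ t) : ℂ) * A₂ t)
    (hode₂ : ∀ t, Complex.I * A₂' t
      = ((σ * Real.cosh η₁ : ℝ) : ℂ) * (Complex.normSq (A₁ t) : ℂ) * A₁ t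
        + ((Real.sinh η₁ : ℝ) : ℂ)
          * (2 * A₁ t * (Complex.normSq (A₂ t) : ℂ) + (starRingEnd ℂ) (A₁ t) * A₂ t ^ 2)
        + ((-σ * η₂ * Real.cosh η₁ + η₃ * Real.sinh η₁ : ℝ) : ℂ)
          * (Complex.normSq (A₂ t) : ℂ) * A₂ t) :
    ∀ s t : ℝ,
      Complex.normSq (A₁ s) ^ 2
          + 2 * σ * Real.tanh η₁ * Complex.normSq (A₁ s) * Complex.normSq (A₂ s)
          + Complex.normSq (A₂ s) ^ 2
        = Complex.normSq (A₁ t) ^ 2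
          + 2 * σ * Real.tanh η₁ * Complex.normSq (A₁ t) * Complex.normSq (A₂ t)
          + Complex.normSq (A₂ t) ^ 2 := by
  have hE := cubicField_system_conserved hd₁ hd₂ hode₁ (d := -σ * η₂ * cosh η₁ + η₃ * sinh η₁)
    fun t => by rw [hode₂ t, cubicField]; ring
  have hσsq : σ ^ 2 = 1 := by rcases hσ with rfl | rfl <;> norm_num
  have hrescale (x y : ℝ) : x ^ 2 + 2 * σ * tanh η₁ * x * y + y ^ 2
      = σ / cosh η₁ * (σ * cosh η₁ * (x ^ 2 + y ^ 2) + 2 * sinh η₁ * (x * y)) := by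
    rw [tanh_eq_sinh_div_cosh]
    field_simp [(cosh_pos η₁).ne']
    linear_combination -(x ^ 2 + y ^ 2) * cosh η₁ * hσsq
  intro s t
  rw [hrescale, hrescale, hE s t]
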